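/- Let Ω_X ⊆ ℂ^{m1} and Ω_Y ⊆ ℂ^{m2} be nonempty bounded sets (Euclidean norm), and let Ω_M = { x yᵀ : x ∈ Ω_X, y ∈ Ω_Y } ⊆ ℂ^{m1×m2} (Frobenius norm). Then the upper Minkowski dimension of Ω_M is at most the sum of the upper Minkowski dimensions of Ω_X and Ω_Y. -/

import Mathlib

open MeasureTheory Filter

/-- Covering number: the minimal number of closed balls of radius `ρ`
(with arbitrary centers) needed to cover `Ω`. -/
noncomputable def coveringNumber {X : Type*} [PseudoMetricSpace X] (Ω : Set X) (ρ : ℝ) : ℕ :=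
  sInf {k : ℕ | ∃ C : Finset X, C.card = k ∧ Ω ⊆ ⋃ c ∈ C, Metric.closedBall c ρ}

/-- Upper Minkowski dimension: `limsup_{ρ → 0⁺} log N_Ω(ρ) / log (1/ρ)`. -/
noncomputable def upperMinkowskiDim {X : Type*} [PseudoMetricSpace X] (Ω : Set X) : ℝ :=
  Filter.limsup (fun ρ : ℝ => Real.log (coveringNumber Ω ρ) / Real.log (1 / ρ))
    (nhdsWithin 0 (Set.Ioi 0))

/-! The covering numbers of a bounded set in a finite-dimensional normed space grow polynomially
in `1/ρ`: a maximal `ρ`-separated subset is a `ρ`-net, and the disjoint `ρ/2`-balls around its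
points bound its size by a ratio of Haar volumes. So the limsups defining the dimensions are not
junk values. On sets of norm at most `R`, `(x, y) ↦ x yᵀ` moves by at most `(2R + 1) ρ` when `x`
and `y` move by `ρ ≤ 1`, so the products of `ρ`-nets of `Ω_X` and `Ω_Y` form a `(2R + 1) ρ`-net of
`Ω_M`, and `N_M((2R + 1) ρ) ≤ N_X(ρ) N_Y(ρ)`. The constant factor `2R + 1` is invisible in
`log N / log (1/ρ)` as `ρ → 0`. -/

open Metric Set Topology Module

section CoveringNumber

variable {X Y Z : Type*} [PseudoMetricSpace X] [PseudoMetricSpace Y] [PseudoMetricSpace Z]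
  {Ω : Set X} {ρ : ℝ}

theorem coveringNumber_le_card (C : Finset X) (h : Ω ⊆ ⋃ c ∈ C, closedBall c ρ) :
    coveringNumber Ω ρ ≤ C.card :=
  Nat.sInf_le ⟨C, rfl, h⟩

theorem exists_card_eq_coveringNumber (h : ∃ C : Finset X, Ω ⊆ ⋃ c ∈ C, closedBall c ρ) :
    ∃ C : Finset X, C.card = coveringNumber Ω ρ ∧ Ω ⊆ ⋃ c ∈ C, closedBall c ρ := by
  obtain ⟨C, hC⟩ := h
  exact Nat.sInf_mem (s := {k | ∃ C : Finset X, C.card = k ∧ Ω ⊆ ⋃ c ∈ C, closedBall c ρ})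
    ⟨C.card, C, rfl, hC⟩

theorem Bornology.IsBounded.exists_finset_cover [ProperSpace X] (hΩ : Bornology.IsBounded Ω)
    (hρ : 0 < ρ) : ∃ C : Finset X, Ω ⊆ ⋃ c ∈ C, closedBall c ρ := by
  obtain ⟨t, ht, hcover⟩ :=
    totallyBounded_iff.1 (hΩ.isCompact_closure.totallyBounded.subset subset_closure) ρ hρ
  refine ⟨ht.toFinset, hcover.trans (iUnion₂_mono' fun c hc => ⟨c, ?_, ball_subset_closedBall⟩)⟩
  simpa using hc

theorem coveringNumber_image2_le {f : X → Y → Z} {S : Set X} {T : Set Y} {σ : ℝ}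
    (hS : ∃ C : Finset X, S ⊆ ⋃ c ∈ C, closedBall c ρ)
    (hT : ∃ D : Finset Y, T ⊆ ⋃ d ∈ D, closedBall d ρ)
    (hf : ∀ x ∈ S, ∀ y ∈ T, ∀ c d, dist x c ≤ ρ → dist y d ≤ ρ → dist (f x y) (f c d) ≤ σ) :
    coveringNumber (image2 f S T) σ ≤ coveringNumber S ρ * coveringNumber T ρ := by
  classical
  obtain ⟨C, hCcard, hC⟩ := exists_card_eq_coveringNumber hS
  obtain ⟨D, hDcard, hD⟩ := exists_card_eq_coveringNumber hT
  rw [← hCcard, ← hDcard, ← Finset.card_product]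
  refine (coveringNumber_le_card ((C ×ˢ D).image fun cd => f cd.1 cd.2) ?_).trans
    Finset.card_image_le
  rintro _ ⟨x, hx, y, hy, rfl⟩
  obtain ⟨c, hc, hxc⟩ := mem_iUnion₂.1 (hC hx)
  obtain ⟨d, hd, hyd⟩ := mem_iUnion₂.1 (hD hy)
  exact mem_iUnion₂.2 ⟨f c d, Finset.mem_image.2 ⟨(c, d), Finset.mem_product.2 ⟨hc, hd⟩, rfl⟩,
    hf x hx y hy c d hxc hyd⟩

end CoveringNumber

section FiniteDimensional

variable {E : Type*} [NormedAddCommGroup E] [NormedSpace ℝ E] [FiniteDimensional ℝ E]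

theorem card_le_of_pairwise_lt_dist {s : Finset E} {a : E} {R ρ : ℝ} (hR : 0 ≤ R) (hρ : 0 < ρ)
    (hs : ↑s ⊆ closedBall a R) (hsep : (s : Set E).Pairwise fun x y => ρ < dist x y) :
    (s.card : ℝ) ≤ ((2 * R + ρ) / ρ) ^ finrank ℝ E := by
  borelize E
  set μ : Measure E := Measure.addHaar
  have hdisj : (s : Set E).PairwiseDisjoint fun x => closedBall x (ρ / 2) := by
    refine hsep.mono' fun x y hxy => closedBall_disjoint_closedBall ?_
    linarith
  have hunion : (⋃ x ∈ s, closedBall x (ρ / 2)) ⊆ closedBall a (R + ρ / 2) :=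
    iUnion₂_subset fun x hx =>
      closedBall_subset_closedBall' (by linarith [mem_closedBall.1 (hs hx)])
  have hvol : (s.card : ENNReal) * ENNReal.ofReal ((ρ / 2) ^ finrank ℝ E)
      ≤ ENNReal.ofReal ((R + ρ / 2) ^ finrank ℝ E) := by
    have := measure_mono (μ := μ) hunion
    rw [measure_biUnion_finset hdisj fun x _ => measurableSet_closedBall] at this
    simp only [Measure.addHaar_closedBall μ _ (by positivity : 0 ≤ ρ / 2),
      Measure.addHaar_closedBall μ _ (by positivity : 0 ≤ R + ρ / 2), Finset.sum_const,
      nsmul_eq_mul, ← mul_assoc] at this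
    exact (ENNReal.mul_le_mul_iff_left (measure_ball_pos μ 0 one_pos).ne'
      measure_ball_lt_top.ne).1 this
  rw [← ENNReal.ofReal_natCast, ← ENNReal.ofReal_mul (by positivity),
    ENNReal.ofReal_le_ofReal_iff (by positivity), ← le_div_iff₀ (by positivity),
    ← div_pow] at hvol
  rwa [show (R + ρ / 2) / (ρ / 2) = (2 * R + ρ) / ρ by field_simp] at hvol

theorem exists_finset_cover_card_le {Ω : Set E} {a : E} {R ρ : ℝ} (hR : 0 ≤ R) (hρ : 0 < ρ)
    (hΩ : Ω ⊆ closedBall a R) : ∃ C : Finset E,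
      (C.card : ℝ) ≤ ((2 * R + ρ) / ρ) ^ finrank ℝ E ∧ Ω ⊆ ⋃ c ∈ C, closedBall c ρ := by
  classical
  let IsPacking : Finset E → Prop := fun s =>
    ↑s ⊆ Ω ∧ (s : Set E).Pairwise fun x y => ρ < dist x y
  have hbound (s : Finset E) (hs : IsPacking s) :
      (s.card : ℝ) ≤ ((2 * R + ρ) / ρ) ^ finrank ℝ E :=
    card_le_of_pairwise_lt_dist hR hρ (hs.1.trans hΩ) hs.2
  obtain ⟨s, hs, hmax⟩ : ∃ s, IsPacking s ∧ ∀ t, IsPacking t → t.card ≤ s.card := by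
    have hbdd : BddAbove {k | ∃ s, IsPacking s ∧ s.card = k} := by
      refine ⟨⌈((2 * R + ρ) / ρ) ^ finrank ℝ E⌉₊, ?_⟩
      rintro _ ⟨s, hs, rfl⟩
      exact_mod_cast (hbound s hs).trans (Nat.le_ceil _)
    have hne : {k | ∃ s, IsPacking s ∧ s.card = k}.Nonempty := ⟨0, ∅, by simp [IsPacking], rfl⟩
    obtain ⟨s, hs, hcard⟩ := Nat.sSup_mem hne hbdd
    exact ⟨s, hs, fun t ht => hcard ▸ le_csSup hbdd ⟨t, ht, rfl⟩⟩
  refine ⟨s, hbound s hs, fun x hx => ?_⟩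
  by_contra hfar
  simp only [mem_iUnion₂, mem_closedBall, not_exists, not_le] at hfar
  have hxs : x ∉ s := fun h => by linarith [dist_self x ▸ hfar x h]
  have hins : IsPacking (insert x s) := by
    refine ⟨by simpa using insert_subset hx hs.1, ?_⟩
    rw [Finset.coe_insert, pairwise_insert]
    exact ⟨hs.2, fun c hc _ => ⟨hfar c hc, dist_comm x c ▸ hfar c hc⟩⟩
  have := hmax _ hins
  rw [Finset.card_insert_of_notMem hxs] at this
  omega

theorem Bornology.IsBounded.isBoundedUnder_log_coveringNumber_div {Ω : Set E}
    (hΩ : Bornology.IsBounded Ω) : IsBoundedUnder (· ≤ ·) (𝓝[>] 0)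
      fun ρ : ℝ => Real.log (coveringNumber Ω ρ) / Real.log (1 / ρ) := by
  obtain ⟨R, hR, hΩR⟩ : ∃ R, 0 ≤ R ∧ Ω ⊆ closedBall (0 : E) R := by
    obtain ⟨R, hΩR⟩ := hΩ.subset_closedBall 0
    exact ⟨max R 0, le_max_right _ _, hΩR.trans (closedBall_subset_closedBall (le_max_left _ _))⟩
  refine ⟨2 * finrank ℝ E, eventually_map.2 ?_⟩
  filter_upwards [Ioo_mem_nhdsGT (show (0 : ℝ) < 1 / (2 * R + 1) by positivity)]
    with ρ ⟨hρ, hρR⟩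
  obtain ⟨C, hCcard, hC⟩ := exists_finset_cover_card_le hR hρ hΩR
  have hρR' : 2 * R + ρ ≤ 1 / ρ := by
    rw [lt_div_iff₀ (by positivity)] at hρR
    rw [le_div_iff₀ hρ]
    nlinarith
  have hρ1 : ρ < 1 := hρR.trans_le (div_le_one_of_le₀ (by linarith) (by positivity))
  have hL : 0 < Real.log (1 / ρ) := Real.log_pos (one_lt_one_div hρ hρ1)
  have hN : (coveringNumber Ω ρ : ℝ) ≤ (1 / ρ) ^ (2 * finrank ℝ E) :=
    calc (coveringNumber Ω ρ : ℝ) ≤ C.card := by exact_mod_cast coveringNumber_le_card C hC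
      _ ≤ ((2 * R + ρ) / ρ) ^ finrank ℝ E := hCcard
      _ ≤ (1 / ρ / ρ) ^ finrank ℝ E := by gcongr
      _ = (1 / ρ) ^ (2 * finrank ℝ E) := by rw [pow_mul]; ring
  rw [div_le_iff₀ hL]
  rcases (coveringNumber Ω ρ).eq_zero_or_pos with h0 | hpos
  · rw [h0, Nat.cast_zero, Real.log_zero]
    positivity
  · calc Real.log (coveringNumber Ω ρ) ≤ Real.log ((1 / ρ) ^ (2 * finrank ℝ E)) :=
          Real.log_le_log (by exact_mod_cast hpos) hN
      _ = _ := by rw [Real.log_pow]; push_cast; ring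

end FiniteDimensional

theorem tendsto_log_one_div_nhdsGT_zero :
    Tendsto (fun ρ : ℝ => Real.log (1 / ρ)) (𝓝[>] 0) atTop := by
  simpa [one_div, Real.log_inv] using Real.tendsto_log_nhdsGT_zero

theorem Real.log_natCast_le_add_of_le_mul {a b c : ℕ} (h : a ≤ b * c) :
    Real.log a ≤ Real.log b + Real.log c := by
  rcases a.eq_zero_or_pos with rfl | ha
  · rw [Nat.cast_zero, Real.log_zero]
    exact add_nonneg (Real.log_natCast_nonneg b) (Real.log_natCast_nonneg c)
  · have hbc : 0 < b * c := ha.trans_le h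
    rw [← Real.log_mul (by exact_mod_cast (Nat.pos_of_mul_pos_right hbc).ne')
      (by exact_mod_cast (Nat.pos_of_mul_pos_left hbc).ne')]
    exact Real.log_le_log (by exact_mod_cast ha) (by exact_mod_cast h)

section UpperMinkowskiDim

variable {X Y Z : Type*} [PseudoMetricSpace X] [PseudoMetricSpace Y] [PseudoMetricSpace Z]

theorem upperMinkowskiDim_le_of_eventually_log_le {Ω : Set X} {s : ℝ}
    (h : ∀ t > s, ∀ᶠ ρ in 𝓝[>] 0, Real.log (coveringNumber Ω ρ) ≤ t * Real.log (1 / ρ)) :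
    upperMinkowskiDim Ω ≤ s := by
  have hpos := tendsto_log_one_div_nhdsGT_zero.eventually_gt_atTop 0
  refine le_of_forall_gt_imp_ge_of_dense fun t ht => limsup_le_of_le ?_ ?_
  · exact isCoboundedUnder_le_of_eventually_le _
      (hpos.mono fun ρ hρ => div_nonneg (Real.log_natCast_nonneg _) hρ.le)
  · filter_upwards [h t ht, hpos] with ρ hle hρ
    exact (div_le_iff₀ hρ).2 hle

theorem eventually_log_coveringNumber_le {Ω : Set X} {t : ℝ}
    (hb : IsBoundedUnder (· ≤ ·) (𝓝[>] 0)
      fun ρ : ℝ => Real.log (coveringNumber Ω ρ) / Real.log (1 / ρ))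
    (ht : upperMinkowskiDim Ω < t) :
    ∀ᶠ ρ in 𝓝[>] 0, Real.log (coveringNumber Ω ρ) ≤ t * Real.log (1 / ρ) := by
  filter_upwards [eventually_lt_of_limsup_lt ht hb,
    tendsto_log_one_div_nhdsGT_zero.eventually_gt_atTop 0] with ρ hlt hρ
  exact ((div_lt_iff₀ hρ).1 hlt).le

theorem upperMinkowskiDim_le_add_of_coveringNumber_le_mul {S : Set X} {T : Set Y} {U : Set Z}
    {K : ℝ} (hK : 0 < K)
    (hS : IsBoundedUnder (· ≤ ·) (𝓝[>] 0)
      fun ρ : ℝ => Real.log (coveringNumber S ρ) / Real.log (1 / ρ))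
    (hT : IsBoundedUnder (· ≤ ·) (𝓝[>] 0)
      fun ρ : ℝ => Real.log (coveringNumber T ρ) / Real.log (1 / ρ))
    (hU : ∀ᶠ ρ in 𝓝[>] 0, coveringNumber U (K * ρ) ≤ coveringNumber S ρ * coveringNumber T ρ) :
    upperMinkowskiDim U ≤ upperMinkowskiDim S + upperMinkowskiDim T := by
  refine upperMinkowskiDim_le_of_eventually_log_le fun t ht => ?_
  set δ := (t - (upperMinkowskiDim S + upperMinkowskiDim T)) / 3 with hδ
  have hδpos : 0 < δ := by rw [hδ]; linarith
  have hscaled : ∀ᶠ σ in 𝓝[>] 0,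
      Real.log (coveringNumber U (K * σ)) ≤ t * Real.log (1 / (K * σ)) := by
    filter_upwards [hU, eventually_log_coveringNumber_le hS (lt_add_of_pos_right _ hδpos),
      eventually_log_coveringNumber_le hT (lt_add_of_pos_right _ hδpos),
      tendsto_log_one_div_nhdsGT_zero.eventually_ge_atTop (t * Real.log K / δ),
      self_mem_nhdsWithin] with σ hUσ hSσ hTσ hlarge (hσ : 0 < σ)
    have hlog : Real.log (1 / (K * σ)) = Real.log (1 / σ) - Real.log K := by
      rw [one_div, Real.log_inv, Real.log_mul hK.ne' hσ.ne', one_div, Real.log_inv]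
      ring
    rw [div_le_iff₀ hδpos] at hlarge
    calc Real.log (coveringNumber U (K * σ))
        ≤ Real.log (coveringNumber S σ) + Real.log (coveringNumber T σ) :=
          Real.log_natCast_le_add_of_le_mul hUσ
      _ ≤ (upperMinkowskiDim S + δ) * Real.log (1 / σ)
          + (upperMinkowskiDim T + δ) * Real.log (1 / σ) := add_le_add hSσ hTσ
      _ ≤ t * Real.log (1 / (K * σ)) := by
          rw [hlog]
          linear_combination hlarge + Real.log (1 / σ) * hδ
  simpa [mul_inv_cancel_left₀ hK.ne'] using eventually_nhdsGT_zero_mul_left (inv_pos.2 hK) hscaled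

end UpperMinkowskiDim

section OuterProduct

variable {𝕜 : Type*} [RCLike 𝕜] {ι κ : Type*}

namespace EuclideanSpace

noncomputable def outerProduct (x : EuclideanSpace 𝕜 ι) (y : EuclideanSpace 𝕜 κ) :
    EuclideanSpace 𝕜 (ι × κ) :=
  WithLp.toLp 2 fun p => x p.1 * y p.2

variable (x c : EuclideanSpace 𝕜 ι) (y d : EuclideanSpace 𝕜 κ)

@[simp]
theorem outerProduct_apply (p : ι × κ) : outerProduct x y p = x p.1 * y p.2 := rfl

theorem outerProduct_sub_outerProduct :
    outerProduct x y - outerProduct c d = outerProduct (x - c) y + outerProduct c (y - d) := by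
  ext p
  simp only [PiLp.sub_apply, PiLp.add_apply, outerProduct_apply]
  ring

variable [Fintype ι] [Fintype κ]

theorem norm_outerProduct : ‖outerProduct x y‖ = ‖x‖ * ‖y‖ := by
  rw [EuclideanSpace.norm_eq, EuclideanSpace.norm_eq, EuclideanSpace.norm_eq,
    ← Real.sqrt_mul (by positivity), Finset.sum_mul_sum, ← Finset.sum_product',
    Finset.univ_product_univ]
  simp only [outerProduct_apply, norm_mul, mul_pow]

theorem dist_outerProduct_le :
    dist (outerProduct x y) (outerProduct c d) ≤ dist x c * ‖y‖ + ‖c‖ * dist y d := by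
  rw [dist_eq_norm, outerProduct_sub_outerProduct, dist_eq_norm, dist_eq_norm,
    ← norm_outerProduct, ← norm_outerProduct]
  exact norm_add_le _ _

end EuclideanSpace

end OuterProduct

open EuclideanSpace

theorem upper_minkowski_dim_rank_one_general (m1 m2 : ℕ)
    (ΩX : Set (EuclideanSpace ℂ (Fin m1))) (ΩY : Set (EuclideanSpace ℂ (Fin m2)))
    (hXbd : Bornology.IsBounded ΩX) (hYbd : Bornology.IsBounded ΩY) :
    upperMinkowskiDim {M : EuclideanSpace ℂ (Fin m1 × Fin m2) |
        ∃ x ∈ ΩX, ∃ y ∈ ΩY, ∀ p : Fin m1 × Fin m2, M p = x p.1 * y p.2}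
      ≤ upperMinkowskiDim ΩX + upperMinkowskiDim ΩY := by
  obtain ⟨R, hR, hXR, hYR⟩ : ∃ R, 0 ≤ R ∧ ΩX ⊆ closedBall 0 R ∧ ΩY ⊆ closedBall 0 R := by
    obtain ⟨RX, hX⟩ := hXbd.subset_closedBall 0
    obtain ⟨RY, hY⟩ := hYbd.subset_closedBall 0
    exact ⟨max (max RX RY) 0, le_max_right _ _,
      hX.trans (closedBall_subset_closedBall (by simp)),
      hY.trans (closedBall_subset_closedBall (by simp))⟩
  have hM : {M : EuclideanSpace ℂ (Fin m1 × Fin m2) |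
      ∃ x ∈ ΩX, ∃ y ∈ ΩY, ∀ p : Fin m1 × Fin m2, M p = x p.1 * y p.2}
      = image2 outerProduct ΩX ΩY := by
    ext M
    simp only [mem_ofPred_eq, mem_image2, eq_comm (b := M), PiLp.ext_iff, outerProduct_apply]
  rw [hM]
  refine upperMinkowskiDim_le_add_of_coveringNumber_le_mul (K := 2 * R + 1) (by positivity)
    hXbd.isBoundedUnder_log_coveringNumber_div hYbd.isBoundedUnder_log_coveringNumber_div ?_
  filter_upwards [Ioo_mem_nhdsGT one_pos] with ρ ⟨hρ, hρ1⟩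
  refine coveringNumber_image2_le (hXbd.exists_finset_cover hρ) (hYbd.exists_finset_cover hρ)
    fun x hx y hy c d hxc hyd => ?_
  have hyR : ‖y‖ ≤ R := mem_closedBall_zero_iff.1 (hYR hy)
  have hc : ‖c‖ ≤ R + ρ := by
    rw [dist_comm] at hxc
    linarith [norm_le_norm_add_const_of_dist_le hxc, mem_closedBall_zero_iff.1 (hXR hx)]
  calc dist (outerProduct x y) (outerProduct c d) ≤ dist x c * ‖y‖ + ‖c‖ * dist y d :=
        dist_outerProduct_le x c y d
    _ ≤ ρ * R + (R + ρ) * ρ := by gcongr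
    _ ≤ (2 * R + 1) * ρ := by nlinarith

/-- For nonempty bounded `Ω_X ⊆ ℂ^{m1}`, `Ω_Y ⊆ ℂ^{m2}` (Euclidean norm), the set of
rank-one matrices `Ω_M = {x yᵀ : x ∈ Ω_X, y ∈ Ω_Y}` (Frobenius norm) has upper Minkowski
dimension at most the sum of the upper Minkowski dimensions of `Ω_X` and `Ω_Y`. -/
theorem upper_minkowski_dim_rank_one (m1 m2 : ℕ)
    (ΩX : Set (EuclideanSpace ℂ (Fin m1))) (ΩY : Set (EuclideanSpace ℂ (Fin m2)))
    (hXne : ΩX.Nonempty) (hYne : ΩY.Nonempty)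
    (hXbd : Bornology.IsBounded ΩX) (hYbd : Bornology.IsBounded ΩY) :
    upperMinkowskiDim {M : EuclideanSpace ℂ (Fin m1 × Fin m2) |
        ∃ x ∈ ΩX, ∃ y ∈ ΩY, ∀ p : Fin m1 × Fin m2, M p = x p.1 * y p.2}
      ≤ upperMinkowskiDim ΩX + upperMinkowskiDim ΩY :=
  upper_minkowski_dim_rank_one_general m1 m2 ΩX ΩY hXbd hYbd
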